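/- Let (N, K, v) be a P-extendable incomplete cooperative game with K intersection-closed and N ∈ K. Then the UD-game v_UD, the complete game whose dividends equal the unique δ-system of (N, K, v), is a P-extension of (N, K, v): it is positive and satisfies v_UD(S) = v(S) for every S ∈ K. -/
import Mathlib


open Finset

variable {α : Type*} [Fintype α] [DecidableEq α]

/-- A set system is intersection-closed if it is closed under pairwise intersections. -/
def InterClosed (K : Finset (Finset α)) : Prop :=
  ∀ S ∈ K, ∀ T ∈ K, S ∩ T ∈ K

/-- The closure `c_K(T) = ⋂ {S ∈ K : T ⊆ S}` of a coalition `T` in the set system `K`. -/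
def cl (K : Finset (Finset α)) (T : Finset α) : Finset α :=
  (K.filter fun S => T ⊆ S).inf id

/-- The family `C(T)` of coalitions indistinguishable from `T`. -/
def classOf (K : Finset (Finset α)) (T : Finset α) : Finset (Finset α) :=
  Finset.univ.filter fun X => cl K X = cl K T

/-- The Harsanyi dividend `d_w(S) = w S - ∑_{T ⊊ S} d_w(T)`. -/
noncomputable def dividend (w : Finset α → ℝ) (S : Finset α) : ℝ :=
  w S - ∑ T ∈ (S.powerset.erase S).attach, dividend w T.1
termination_by S.card
decreasing_by
  have h := T.2
  simp only [mem_erase, mem_powerset] at h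
  exact Finset.card_lt_card (h.2.ssubset_of_ne h.1)

/-- The surplus `Δ_v(S) = v S - ∑_{T ∈ K, T ⊊ S} Δ_v(T)` for `S ∈ K`. -/
noncomputable def Delta (K : Finset (Finset α)) (v : Finset α → ℝ) (S : Finset α) : ℝ :=
  v S - ∑ T ∈ (K.filter fun T => T ⊂ S).attach, Delta K v T.1
termination_by S.card
decreasing_by
  have h := T.2
  simp only [mem_filter] at h
  exact Finset.card_lt_card h.2

/-- A δ-system for the incomplete game `(N, K, v)`. -/
def IsDeltaSystem (K : Finset (Finset α)) (v δ : Finset α → ℝ) : Prop :=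
  (∀ S ∈ K, ∑ T ∈ S.powerset, δ T = v S) ∧
  ∀ S T : Finset α, cl K S = cl K T → δ S = δ T

/-- The payoff `Φ_i = ∑_{S ∋ i} δ(S)/|S|` computed from a dividend function `δ`. -/
noncomputable def UDofDelta (δ : Finset α → ℝ) (i : α) : ℝ :=
  ∑ S ∈ Finset.univ.filter (fun S => i ∈ S), δ S / S.card

/-- The complete game whose Harsanyi dividends are `δ`. -/
def gameOf (δ : Finset α → ℝ) (S : Finset α) : ℝ := ∑ T ∈ S.powerset, δ T

/-- A P-extension: a positive cooperative game agreeing with `v` on `K`. -/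
def PExtension (K : Finset (Finset α)) (v w : Finset α → ℝ) : Prop :=
  w ∅ = 0 ∧ (∀ S, 0 ≤ dividend w S) ∧ ∀ S ∈ K, w S = v S

/-- P-extendability of an incomplete game. -/
def PExtendable (K : Finset (Finset α)) (v : Finset α → ℝ) : Prop :=
  ∃ w, PExtension K v w

/-- The Shapley value `φ_i(w) = ∑_{S ∋ i} d_w(S)/|S|`. -/
noncomputable def shapley (w : Finset α → ℝ) (i : α) : ℝ :=
  ∑ S ∈ Finset.univ.filter (fun S => i ∈ S), dividend w S / S.card

section Aux

variable {α : Type*} [Fintype α] [DecidableEq α]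

theorem subset_cl (K : Finset (Finset α)) (T : Finset α) : T ⊆ cl K T :=
  Finset.le_iff_subset.1 <| Finset.le_inf fun S hS =>
    Finset.le_iff_subset.2 (Finset.mem_filter.1 hS).2

theorem cl_subset (K : Finset (Finset α)) {S T : Finset α} (hS : S ∈ K) (hT : T ⊆ S) :
    cl K T ⊆ S :=
  Finset.le_iff_subset.1 (Finset.inf_le (Finset.mem_filter.2 ⟨hS, hT⟩))

theorem cl_mem (K : Finset (Finset α)) (hIC : InterClosed K)
    (hN : (Finset.univ : Finset α) ∈ K) (T : Finset α) : cl K T ∈ K := by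
  have hne : (K.filter fun S => T ⊆ S).Nonempty :=
    ⟨Finset.univ, Finset.mem_filter.2 ⟨hN, Finset.subset_univ T⟩⟩
  have : (K.filter fun S => T ⊆ S).inf' hne id ∈ (K : Set (Finset α)) := by
    apply Finset.inf'_mem
    · intro x hx y hy; exact hIC x hx y hy
    · intro i hi; exact (Finset.mem_filter.1 hi).1
  rwa [Finset.inf'_eq_inf] at this

theorem cl_of_mem (K : Finset (Finset α)) {S : Finset α} (hS : S ∈ K) : cl K S = S :=
  Finset.Subset.antisymm (cl_subset K hS Finset.Subset.rfl) (subset_cl K S)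

theorem sum_powerset_dividend (w : Finset α → ℝ) (S : Finset α) :
    ∑ T ∈ S.powerset, dividend w T = w S := by
  rw [← Finset.sum_erase_add _ _ (Finset.mem_powerset_self S), dividend,
    Finset.sum_attach]
  ring

/-- Key uniqueness lemma: for any δ-system and any game `w` agreeing with `v` on `K`,
the class sums match. -/
theorem key_lemma (K : Finset (Finset α)) (hIC : InterClosed K)
    (hN : (Finset.univ : Finset α) ∈ K) (v δ : Finset α → ℝ)
    (hδ : IsDeltaSystem K v δ) (w : Finset α → ℝ) (hw : ∀ S ∈ K, w S = v S) :
    ∀ n : ℕ, ∀ T : Finset α, (cl K T).card = n →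
      ((classOf K T).card : ℝ) * δ T = ∑ X ∈ classOf K T, dividend w X := by
  intro n
  induction n using Nat.strong_induction_on with
  | _ n ih =>
    intro T hT
    set C := cl K T with hC
    have hCK : C ∈ K := cl_mem K hIC hN T
    have hclC : cl K C = C := cl_of_mem K hCK
    -- class of T = class of C, δ T = δ C
    have hclass : classOf K T = classOf K C := by
      unfold classOf; rw [hclC, ← hC]
    have hδTC : δ T = δ C := hδ.2 T C (by rw [hclC, ← hC])
    rw [hclass, hδTC]
    -- fibers of cl within powerset C
    have hfiber : ∀ D : Finset α, D ⊆ C →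
        (C.powerset.filter fun X => cl K X = D) = Finset.univ.filter fun X => cl K X = D := by
      intro D hD
      ext X
      simp only [Finset.mem_filter, Finset.mem_powerset, Finset.mem_univ, true_and,
        and_iff_right_iff_imp]
      intro hX
      exact (subset_cl K X).trans (hX ▸ hD)
    have hmaps : ∀ X ∈ C.powerset, cl K X ∈ C.powerset.image (cl K) :=
      fun X hX => Finset.mem_image_of_mem _ hX
    have hsumδ := Finset.sum_fiberwise_of_maps_to hmaps δ
    have hsumw := Finset.sum_fiberwise_of_maps_to hmaps (dividend w)
    have hCimg : C ∈ C.powerset.image (cl K) := by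
      refine Finset.mem_image.2 ⟨C, Finset.mem_powerset_self C, hclC⟩
    -- the two totals coincide
    have htot : ∑ X ∈ C.powerset, δ X = ∑ X ∈ C.powerset, dividend w X := by
      rw [hδ.1 C hCK, sum_powerset_dividend, hw C hCK]
    -- split off the C-fiber
    rw [← Finset.sum_erase_add _ _ hCimg] at hsumδ hsumw
    -- fibers other than C agree, by induction hypothesis
    have hrest : ∑ D ∈ (C.powerset.image (cl K)).erase C,
        ∑ X ∈ C.powerset.filter fun X => cl K X = D, δ X
        = ∑ D ∈ (C.powerset.image (cl K)).erase C,
        ∑ X ∈ C.powerset.filter fun X => cl K X = D, dividend w X := by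
      apply Finset.sum_congr rfl
      intro D hD
      obtain ⟨hDne, hDimg⟩ := Finset.mem_erase.1 hD
      obtain ⟨Y, hY, hYD⟩ := Finset.mem_image.1 hDimg
      have hDK : D ∈ K := hYD ▸ cl_mem K hIC hN Y
      have hDC : D ⊆ C := hYD ▸ cl_subset K hCK (Finset.mem_powerset.1 hY)
      have hclD : cl K D = D := cl_of_mem K hDK
      have hDlt : D.card < n := by
        rw [← hT]
        exact Finset.card_lt_card (Finset.ssubset_iff_subset_ne.2 ⟨hDC, hDne⟩)
      have hkey := ih D.card hDlt D (by rw [hclD])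
      have hfd := hfiber D hDC
      have hclassD : classOf K D = C.powerset.filter fun X => cl K X = D := by
        unfold classOf; rw [hclD, hfd]
      rw [hclassD] at hkey
      -- δ is constant = δ D on the fiber
      have hconst : ∑ X ∈ C.powerset.filter (fun X => cl K X = D), δ X
          = ((C.powerset.filter fun X => cl K X = D).card : ℝ) * δ D := by
        rw [Finset.sum_congr rfl (fun X hX => hδ.2 X D (by
          rw [(Finset.mem_filter.1 hX).2, hclD]))]
        rw [Finset.sum_const, nsmul_eq_mul]
      rw [hconst, hkey]
    -- the C-fiber is classOf K C
    have hclassC : classOf K C = C.powerset.filter fun X => cl K X = C := by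
      unfold classOf; rw [hclC, hfiber C Finset.Subset.rfl]
    have hconstC : ∑ X ∈ C.powerset.filter (fun X => cl K X = C), δ X
        = ((C.powerset.filter fun X => cl K X = C).card : ℝ) * δ C := by
      rw [Finset.sum_congr rfl (fun X hX => hδ.2 X C (by
        rw [(Finset.mem_filter.1 hX).2, hclC]))]
      rw [Finset.sum_const, nsmul_eq_mul]
    rw [hclassC]
    have := hsumδ.trans (htot.trans hsumw.symm)
    rw [hrest, hconstC] at this
    linarith

end Aux

section Aux2
variable {α : Type*} [Fintype α] [DecidableEq α]

theorem dividend_gameOf (δ : Finset α → ℝ) (S : Finset α) :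
    dividend (gameOf δ) S = δ S := by
  induction S using Finset.strongInduction with
  | _ S ih =>
    have h := sum_powerset_dividend (gameOf δ) S
    rw [gameOf, ← Finset.sum_erase_add _ (dividend (gameOf δ)) (Finset.mem_powerset_self S),
      ← Finset.sum_erase_add _ δ (Finset.mem_powerset_self S)] at h
    have heq : ∑ T ∈ S.powerset.erase S, dividend (gameOf δ) T
        = ∑ T ∈ S.powerset.erase S, δ T := by
      apply Finset.sum_congr rfl
      intro T hT
      obtain ⟨hne, hsub⟩ := Finset.mem_erase.1 hT
      exact ih T ((Finset.mem_powerset.1 hsub).ssubset_of_ne hne)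
    linarith

end Aux2

/-- the UD-game, the complete game whose dividends equal the unique
δ-system, is a P-extension of `(N, K, v)`. -/
theorem udGame_is_pExtension (K : Finset (Finset α))
    (hIC : InterClosed K) (hempty : ∅ ∈ K) (hN : (Finset.univ : Finset α) ∈ K)
    (v : Finset α → ℝ) (hv : v ∅ = 0) (hext : PExtendable K v)
    (δ : Finset α → ℝ) (hδ : IsDeltaSystem K v δ) :
    (∀ S : Finset α, dividend (gameOf δ) S = δ S) ∧ PExtension K v (gameOf δ) := by
  obtain ⟨w, hw0, hwpos, hwK⟩ := hext
  have hdiv : ∀ S : Finset α, dividend (gameOf δ) S = δ S := dividend_gameOf δ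
  refine ⟨hdiv, ?_, ?_, fun S hS => hδ.1 S hS⟩
  · show ∑ T ∈ (∅ : Finset α).powerset, δ T = 0
    rw [hδ.1 ∅ hempty, hv]
  · intro S
    rw [hdiv S]
    have hkey := key_lemma K hIC hN v δ hδ w hwK (cl K S).card S rfl
    have hSmem : S ∈ classOf K S := by
      unfold classOf; exact Finset.mem_filter.2 ⟨Finset.mem_univ S, rfl⟩
    have hcpos : (0 : ℝ) < (classOf K S).card := by
      exact_mod_cast Finset.card_pos.2 ⟨S, hSmem⟩
    have hpos : 0 ≤ ∑ X ∈ classOf K S, dividend w X :=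
      Finset.sum_nonneg fun X _ => hwpos X
    nlinarith
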